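/- The first trace subshift of zot, taken two-sidedly (zot is bijective, so for c ∈ {0,1,2}^ℕ the orbit (zot^i(c)_0)_{i∈ℤ} is defined using the inverse for negative i), equals the set of bi-infinite concatenations of the blocks 00 and 12. Precisely: a sequence t ∈ {0,1,2}^ℤ satisfies t = (zot^i(c)_0)_{i∈ℤ} for some c ∈ {0,1,2}^ℕ if and only if there exists k ∈ {0,1} such that for every i ∈ ℤ, the pair (t_{2i+k}, t_{2i+k+1}) is either (0,0) or (1,2). -/

import Mathlib

/-!
In the space-time diagram of a `zot`-orbit, the trace of each cell is driven by the trace of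
its right neighbour: `x_{i+1} = ρ_{y_i}(x_i)`. Since `ρ_a(1) = 2` and only `1` maps to `2`,
every trace consists of blocks `12` separated by `0`s. Suppose a trace has `1`s at positions
`a` and `a + d` with `d ≥ 3` odd. Either it also has a `1` at `a + 2` or `a + d - 2`, or the
transitions `2 ↦ 0` at `a + 1` and `0 ↦ 1` at `a + d - 1` force the neighbouring trace to carry
`1`s at `a + 1` and `a + d - 1`; either way the odd distance drops by two, so by induction all
`1`s of a trace have the same parity.
Conversely, a concatenation of blocks with phase `k` is driven by an explicit concatenation of
blocks with phase `k + 1`, and iterating this builds the whole space-time diagram.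
-/

/-- The permutations `ρ_a` of `{0,1,2}`: `ρ_0 = ρ_2 = (1 2)` and `ρ_1 = (0 1 2)`
(i.e. `0↦1, 1↦2, 2↦0`).  `rho a x = ρ_a(x)`. -/
def rho (a x : Fin 3) : Fin 3 :=
  if a = 1 then ![1, 2, 0] x else ![0, 2, 1] x

/-- The one-sided cellular automaton `zot : {0,1,2}^ℕ → {0,1,2}^ℕ`,
`zot(c)_i = ρ_{c_{i+1}}(c_i)`. -/
def zot (c : ℕ → Fin 3) : ℕ → Fin 3 := fun i => rho (c (i + 1)) (c i)

/-- The permutations `π_a` of `{0,1,2}`: `π_0 = π_1 = (1 2)` and `π_2 : 0↦2, 2↦1, 1↦0`. -/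
def piInv (a x : Fin 3) : Fin 3 :=
  if a = 2 then ![2, 0, 1] x else ![0, 2, 1] x

/-- The inverse cellular automaton of `zot`, `zotInv(c)_i = π_{c_{i+1}}(c_i)`. -/
def zotInv (c : ℕ → Fin 3) : ℕ → Fin 3 := fun i => piInv (c (i + 1)) (c i)

/-- The `i`-th power of `zot` for `i ∈ ℤ`, using the inverse `zotInv` for negative `i`. -/
def zotZ (i : ℤ) (c : ℕ → Fin 3) : ℕ → Fin 3 :=
  if 0 ≤ i then zot^[i.toNat] c else zotInv^[(-i).toNat] c

lemma eq_zero_of_ne_one_of_ne_two {x : Fin 3} (h1 : x ≠ 1) (h2 : x ≠ 2) : x = 0 := by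
  decide +revert

lemma rho_one (a : Fin 3) : rho a 1 = 2 := by decide +revert

lemma eq_one_of_rho_eq_two {a x : Fin 3} (h : rho a x = 2) : x = 1 := by decide +revert

lemma eq_one_of_rho_zero_eq_one {a : Fin 3} (h : rho a 0 = 1) : a = 1 := by decide +revert

lemma eq_one_of_rho_two_eq_zero {a : Fin 3} (h : rho a 2 = 0) : a = 1 := by decide +revert

lemma piInv_rho (a b x : Fin 3) : piInv (rho b a) (rho a x) = x := by decide +revert

lemma rho_piInv (a b x : Fin 3) : rho (piInv b a) (piInv a x) = x := by decide +revert

def zotPerm : Equiv.Perm (ℕ → Fin 3) where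
  toFun := zot
  invFun := zotInv
  left_inv c := funext fun i => piInv_rho (c (i + 1)) (c (i + 2)) (c i)
  right_inv c := funext fun i => rho_piInv (c (i + 1)) (c (i + 2)) (c i)

lemma zotZ_eq_zpow (i : ℤ) (c : ℕ → Fin 3) : zotZ i c = (zotPerm ^ i) c := by
  unfold zotZ
  rcases i with n | n
  · simp [Equiv.Perm.coe_pow, zotPerm]
  · rw [if_neg (Int.negSucc_lt_zero n).not_ge, zpow_negSucc, ← inv_pow, Equiv.Perm.coe_pow]
    rfl

lemma Equiv.Perm.eq_zpow_apply_of_succ {α : Type*} (f : Equiv.Perm α) {U : ℤ → α}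
    (hU : ∀ i, U (i + 1) = f (U i)) (i : ℤ) : U i = (f ^ i) (U 0) := by
  have step (j : ℤ) : (f ^ (j + 1)) (U 0) = f ((f ^ j) (U 0)) := by
    rw [add_comm, zpow_one_add, Equiv.Perm.mul_apply]
  induction i using Int.induction_on with
  | zero => simp
  | succ i ih => rw [hU, ih, step]
  | pred i ih =>
    apply f.injective
    rw [← hU, ← step, sub_add_cancel, ih]

def IsBlockSeq (k : ℤ) (t : ℤ → Fin 3) : Prop :=
  ∀ i : ℤ, (t (2 * i + k) = 0 ∧ t (2 * i + k + 1) = 0) ∨ (t (2 * i + k) = 1 ∧ t (2 * i + k + 1) = 2)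

lemma isBlockSeq_of_parity {t : ℤ → Fin 3} {k : ℤ}
    (h12 : ∀ i, t i = 1 → t (i + 1) = 2) (h21 : ∀ i, t (i + 1) = 2 → t i = 1)
    (hpar : ∀ i, t i = 1 → i % 2 = k) : IsBlockSeq k t := by
  intro i
  by_cases h1 : t (2 * i + k) = 1
  · exact .inr ⟨h1, h12 _ h1⟩
  have h2 : t (2 * i + k) ≠ 2 := fun h => by
    have := hpar _ (h21 (2 * i + k - 1) (by rwa [sub_add_cancel]))
    omega
  refine .inl ⟨eq_zero_of_ne_one_of_ne_two h1 h2, eq_zero_of_ne_one_of_ne_two ?_ ?_⟩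
  · exact fun h => by have := hpar _ h; omega
  · exact fun h => h1 (h21 _ h)

section Orbit

variable {U : ℤ → ℕ → Fin 3} (hU : ∀ i, U (i + 1) = zot (U i))
include hU

lemma trace_succ_eq_rho (i : ℤ) (n : ℕ) : U (i + 1) n = rho (U i (n + 1)) (U i n) := by
  rw [hU]; rfl

lemma trace_succ_eq_two {i : ℤ} {n : ℕ} (h : U i n = 1) : U (i + 1) n = 2 := by
  rw [trace_succ_eq_rho hU, h, rho_one]

lemma trace_eq_one_of_succ_eq_two {i : ℤ} {n : ℕ} (h : U (i + 1) n = 2) : U i n = 1 :=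
  eq_one_of_rho_eq_two ((trace_succ_eq_rho hU i n).symm.trans h)

lemma trace_succ_eq_zero {i : ℤ} {n : ℕ} (h : U i n ≠ 1) (h' : U (i + 1) n ≠ 1) :
    U (i + 1) n = 0 :=
  eq_zero_of_ne_one_of_ne_two h' fun h2 => h (trace_eq_one_of_succ_eq_two hU h2)

lemma trace_right_eq_one_of_two_zero {i : ℤ} {n : ℕ} (h : U i n = 2) (h' : U (i + 1) n = 0) :
    U i (n + 1) = 1 := by
  rw [trace_succ_eq_rho hU, h] at h'
  exact eq_one_of_rho_two_eq_zero h'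

lemma trace_right_eq_one_of_zero_one {i : ℤ} {n : ℕ} (h : U i n = 0) (h' : U (i + 1) n = 1) :
    U i (n + 1) = 1 := by
  rw [trace_succ_eq_rho hU, h] at h'
  exact eq_one_of_rho_zero_eq_one h'

lemma trace_ne_one_of_odd (m : ℕ) :
    ∀ (a b : ℤ) (n : ℕ), b = a + 2 * m + 1 → U a n = 1 → U b n ≠ 1 := by
  induction m with
  | zero =>
    rintro a b n rfl ha hb
    simp [trace_succ_eq_two hU ha] at hb
  | succ m ih =>
    intro a b n hab ha hb
    push_cast at hab
    have h1 : U (a + 1) n = 2 := trace_succ_eq_two hU ha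
    by_cases h2 : U (a + 1 + 1) n = 1
    · exact ih (a + 1 + 1) b n (by omega) h2 hb
    by_cases h3 : U (b - 1 - 1) n = 1
    · exact ih a (b - 1 - 1) n (by omega) ha h3
    have h4 : U (b - 1) n ≠ 1 := fun h => by
      simpa [hb] using trace_succ_eq_two hU h
    have hstart : U (a + 1) (n + 1) = 1 :=
      trace_right_eq_one_of_two_zero hU h1 (trace_succ_eq_zero hU (by rw [h1]; decide) h2)
    have hzero : U (b - 1) n = 0 := by
      simpa using trace_succ_eq_zero hU h3 (by rwa [sub_add_cancel])
    have hend : U (b - 1) (n + 1) = 1 :=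
      trace_right_eq_one_of_zero_one hU hzero (by rwa [sub_add_cancel])
    exact ih (a + 1) (b - 1) (n + 1) (by omega) hstart hend

lemma trace_emod_two_eq_of_eq_one {a b : ℤ} {n : ℕ} (ha : U a n = 1) (hb : U b n = 1) :
    a % 2 = b % 2 := by
  by_contra hne
  rcases le_total a b with hab | hab
  · obtain ⟨m, hm⟩ : ∃ m : ℕ, b = a + 2 * m + 1 := ⟨((b - a) / 2).toNat, by omega⟩
    exact trace_ne_one_of_odd hU m a b n hm ha hb
  · obtain ⟨m, hm⟩ : ∃ m : ℕ, a = b + 2 * m + 1 := ⟨((a - b) / 2).toNat, by omega⟩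
    exact trace_ne_one_of_odd hU m b a n hm hb ha

lemma exists_isBlockSeq_trace (n : ℕ) :
    ∃ k : ℤ, (k = 0 ∨ k = 1) ∧ IsBlockSeq k (fun i => U i n) := by
  have h12 (i : ℤ) : U i n = 1 → U (i + 1) n = 2 := trace_succ_eq_two hU
  have h21 (i : ℤ) : U (i + 1) n = 2 → U i n = 1 := trace_eq_one_of_succ_eq_two hU
  by_cases hone : ∃ a, U a n = 1
  · obtain ⟨a, ha⟩ := hone
    exact ⟨a % 2, by omega, isBlockSeq_of_parity h12 h21
      fun i hi => trace_emod_two_eq_of_eq_one hU hi ha⟩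
  · push Not at hone
    exact ⟨0, .inl rfl, isBlockSeq_of_parity h12 h21 fun i hi => absurd hi (hone i)⟩

end Orbit

/-- Between two blocks of `u` (phase `k`) the driver is `1` exactly when they differ, as the
transitions `0 ↦ 1` and `2 ↦ 0` require; inside a block of `u` it completes its own block. -/
def driver (k : ℤ) (u : ℤ → Fin 3) (j : ℤ) : Fin 3 :=
  if (j - k) % 2 = 0 then (if u (j - 2) = u j then 0 else 2)
  else (if u (j - 1) = u (j + 1) then 0 else 1)

lemma isBlockSeq_driver (k : ℤ) (u : ℤ → Fin 3) : IsBlockSeq (k + 1) (driver k u) := by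
  intro i
  have hodd : (2 * i + (k + 1) - k) % 2 ≠ 0 := by omega
  have heven : (2 * i + (k + 1) + 1 - k) % 2 = 0 := by omega
  simp only [driver, hodd, heven, if_false, if_true, show 2 * i + (k + 1) - 1 = 2 * i + k by ring,
    show 2 * i + (k + 1) + 1 - 2 = 2 * i + k by ring]
  by_cases hc : u (2 * i + k) = u (2 * i + (k + 1) + 1)
  · exact .inl ⟨by rw [if_pos hc], by rw [if_pos hc]⟩
  · exact .inr ⟨by rw [if_neg hc], by rw [if_neg hc]⟩

lemma rho_driver {k : ℤ} {u : ℤ → Fin 3} (hu : IsBlockSeq k u) (j : ℤ) :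
    u (j + 1) = rho (driver k u j) (u j) := by
  unfold driver
  obtain ⟨i, rfl | rfl⟩ : ∃ i, j = 2 * i + k ∨ j = 2 * i + k + 1 := ⟨(j - k) / 2, by omega⟩
  · rw [if_pos (by omega)]
    have hprev := hu i
    generalize u (2 * i + k - 2) = w
    revert hprev
    generalize u (2 * i + k) = x
    generalize u (2 * i + k + 1) = y
    decide +revert
  · rw [if_neg (by omega), add_sub_cancel_right]
    have hcur := hu i
    have hnext := hu (i + 1)
    rw [show 2 * (i + 1) + k = 2 * i + k + 1 + 1 by ring] at hnext
    revert hcur hnext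
    generalize u (2 * i + k) = p
    generalize u (2 * i + k + 1) = x
    generalize u (2 * i + k + 1 + 1) = y
    generalize u (2 * i + k + 1 + 1 + 1) = q
    decide +revert

/-- The trace of cell `n` in the space-time diagram whose cell `0` has trace `t`. -/
def drivers (k : ℤ) (t : ℤ → Fin 3) : ℕ → ℤ → Fin 3
  | 0 => t
  | n + 1 => driver (k + n) (drivers k t n)

lemma isBlockSeq_drivers {k : ℤ} {t : ℤ → Fin 3} (ht : IsBlockSeq k t) :
    ∀ n : ℕ, IsBlockSeq (k + n) (drivers k t n)
  | 0 => by simpa [drivers] using ht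
  | n + 1 => by
    rw [Nat.cast_succ, ← add_assoc]
    exact isBlockSeq_driver _ _

lemma exists_trace_eq_of_isBlockSeq {k : ℤ} {t : ℤ → Fin 3} (ht : IsBlockSeq k t) :
    ∃ c : ℕ → Fin 3, ∀ i : ℤ, t i = zotZ i c 0 := by
  set U : ℤ → ℕ → Fin 3 := fun i n => drivers k t n i
  have hU (i : ℤ) : U (i + 1) = zotPerm (U i) :=
    funext fun n => rho_driver (isBlockSeq_drivers ht n) i
  refine ⟨U 0, fun i => ?_⟩
  rw [zotZ_eq_zpow, ← zotPerm.eq_zpow_apply_of_succ hU]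
  rfl

/-- The first trace subshift of `zot`, taken two-sidedly, equals the set of bi-infinite
concatenations of the blocks `00` and `12`: a sequence `t ∈ {0,1,2}^ℤ` is of the form
`(zot^i(c)_0)_{i∈ℤ}` for some `c` iff there is `k ∈ {0,1}` such that for every `i ∈ ℤ`
the pair `(t_{2i+k}, t_{2i+k+1})` is `(0,0)` or `(1,2)`. -/
theorem zot_two_sided_trace_characterization (t : ℤ → Fin 3) :
    (∃ c : ℕ → Fin 3, ∀ i : ℤ, t i = zotZ i c 0) ↔
      (∃ k : ℤ, (k = 0 ∨ k = 1) ∧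
        ∀ i : ℤ, (t (2 * i + k) = 0 ∧ t (2 * i + k + 1) = 0) ∨
                 (t (2 * i + k) = 1 ∧ t (2 * i + k + 1) = 2)) := by
  constructor
  · rintro ⟨c, hc⟩
    obtain rfl : t = fun i => zotZ i c 0 := funext hc
    have hU (i : ℤ) : zotZ (i + 1) c = zot (zotZ i c) := by
      simp only [zotZ_eq_zpow, add_comm i, zpow_one_add, Equiv.Perm.mul_apply]
      rfl
    exact exists_isBlockSeq_trace (U := fun i => zotZ i c) hU 0
  · rintro ⟨k, -, hk⟩
    exact exists_trace_eq_of_isBlockSeq hk
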